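/- arXiv:2305.04696 — 2 statements merged into one kernel-verified Lean document; each statement's English description precedes it below -/
import Mathlib

section
/- Let v1, v2 > 0 and b ∈ (0, 1). A strategy profile (X, Y) with E(X) = 1 and E(Y) = b is a Nash equilibrium of the two-player all-pay auction with valuations (v1, v2) if and only if v1 ≥ v2 = 2, b ≤ 4/v1, X = U_O^1, and Y = (1−b)·δ_0 + b·(λ·U_O^1 + (1−λ)·U_E^1) for some λ ∈ [0, 1] with 4/(b·v1) − 2/b + 1 ≤ λ ≤ 4/(b·v1) − 1. In this case the equilibrium payoffs are P_{v1}(X, Y) = (v1/2)·(2 − b) − 1 and P_{v2}(Y, X) = 0. -/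
open scoped BigOperators

/-- A (mixed) strategy: a probability distribution on the nonnegative
integers with finite expectation. -/
structure Strategy where
  p : ℕ → ℝ
  nonneg : ∀ n, 0 ≤ p n
  total : HasSum p 1
  finExp : Summable fun n : ℕ => (n : ℝ) * p n

namespace Strategy

/-- Expectation of a strategy. -/
noncomputable def exp (ξ : Strategy) : ℝ := ∑' n : ℕ, (n : ℝ) * ξ.p n

end Strategy

/-- Probability that an observation from `ξ` strictly exceeds an independent
observation from `η`. -/
noncomputable def prGT (ξ η : Strategy) : ℝ :=
  ∑' n, ξ.p n * ∑ k ∈ Finset.range n, η.p k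

/-- Probability that independent observations from `ξ` and `η` are equal. -/
noncomputable def prEq (ξ η : Strategy) : ℝ := ∑' n, ξ.p n * η.p n

/-- Expected all-pay auction payoff of a player with valuation `v` playing `ξ`
against `η`:  `v·Pr(X > Y) + (v/2)·Pr(X = Y) − E(X)`. -/
noncomputable def payoff (v : ℝ) (ξ η : Strategy) : ℝ :=
  v * prGT ξ η + v / 2 * prEq ξ η - ξ.exp

/-- Nash equilibrium of the two-player all-pay auction with valuations `(v1, v2)`. -/
def IsNashAPA (v1 v2 : ℝ) (X Y : Strategy) : Prop :=
  (∀ X' : Strategy, payoff v1 X' Y ≤ payoff v1 X Y) ∧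
  (∀ Y' : Strategy, payoff v2 Y' X ≤ payoff v2 Y X)

/-- `H(ξ, η) = Pr(X > Y) − Pr(X < Y)`. -/
noncomputable def Hval (ξ η : Strategy) : ℝ := prGT ξ η - prGT η ξ

/-- Nash equilibrium of the discrete General Lotto game `Γ(b1, b2)`. -/
def IsNashLotto (b1 b2 : ℝ) (X Y : Strategy) : Prop :=
  X.exp = b1 ∧ Y.exp = b2 ∧
  (∀ X' : Strategy, X'.exp = b1 → Hval X' Y ≤ Hval X Y) ∧
  (∀ Y' : Strategy, Y'.exp = b2 → Hval Y' X ≤ Hval Y X)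

/-- `U_O^m`: uniform distribution on the odd numbers `{1, 3, …, 2m−1}` (as a pmf). -/
noncomputable def UO (m : ℕ) : ℕ → ℝ := fun n =>
  if Odd n ∧ n < 2 * m then (m : ℝ)⁻¹ else 0

/-- `U_E^m`: uniform distribution on the even numbers `{0, 2, …, 2m}` (as a pmf). -/
noncomputable def UE (m : ℕ) : ℕ → ℝ := fun n =>
  if Even n ∧ n ≤ 2 * m then ((m : ℝ) + 1)⁻¹ else 0

/-- `U_{O↑1}^m`: uniform distribution on the even numbers `{2, 4, …, 2m−2}` (as a pmf). -/
noncomputable def UOup (m : ℕ) : ℕ → ℝ := fun n =>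
  if Even n ∧ 0 < n ∧ n ≤ 2 * m - 2 then ((m : ℝ) - 1)⁻¹ else 0

/-- `δ_j`: the point mass at `j` (as a pmf). -/
noncomputable def deltaFn (j : ℕ) : ℕ → ℝ := fun n => if n = j then 1 else 0

/-- `W_j^m = (1/(2m))·δ_0 + Σ_{i=1}^{j−1}(1/m)·δ_{2i} + (1/(2m))·δ_{2j}
      + Σ_{i=j+1}^{m}(1/m)·δ_{2i−1}` (as a pmf). -/
noncomputable def Wfn (j m : ℕ) : ℕ → ℝ := fun n =>
  if n = 0 ∨ n = 2 * j then (2 * (m : ℝ))⁻¹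
  else if Even n ∧ n < 2 * j then (m : ℝ)⁻¹
  else if Odd n ∧ 2 * j < n ∧ n < 2 * m then (m : ℝ)⁻¹
  else 0

/-- `V_j^m = Σ_{i=1}^{j−1}(2/(2m+1))·δ_{2i−1} + (1/(2m+1))·δ_{2j−1}
      + Σ_{i=j}^{m}(2/(2m+1))·δ_{2i}` (as a pmf). -/
noncomputable def Vfn (j m : ℕ) : ℕ → ℝ := fun n =>
  if n = 2 * j - 1 then (2 * (m : ℝ) + 1)⁻¹
  else if Odd n ∧ n < 2 * j - 1 then 2 * (2 * (m : ℝ) + 1)⁻¹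
  else if Even n ∧ 2 * j ≤ n ∧ n ≤ 2 * m then 2 * (2 * (m : ℝ) + 1)⁻¹
  else 0

/-!
Write `η.winProb n` for the probability that the pure bid `n` beats `η`, ties counted half.
Then `payoff v ξ η` is the `ξ`-average of `v * η.winProb n - n`, so a best response charges only
pure bids attaining the maximum of this function.

If `X` charged `0`, comparing that bid with the bid `1` and with the strategy `Y` itself (whose
payoff against itself is `v/2 - E Y`) confines `X` to `{0, 1, 2}` with `X 2 = X 0` and forces
`Y 0 ≤ Y 2`; as a best response to a strategy bounded by `2`, `Y` lives on `{0, …, 3}`, and this is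
incompatible with `E Y < 1`. So `X 0 = 0`, and `E X = 1` forces `X = δ_1`. Against `δ_1` the
bid `0` (charged by `Y` since `Y 0 ≥ 1 - E Y`) earns nothing, so player 2's value is `0`; this
forces `v2 = 2` and confines `Y` to `{0, 1, 2}`. What remains is that the bids `0` and `2` are no
better than `1` for player 1, which for `λ = Y 1 / b` are the stated bounds.
-/

open Finset

namespace Strategy

variable (ξ : Strategy)

@[ext] theorem ext {ξ η : Strategy} (h : ξ.p = η.p) : ξ = η := by
  cases ξ; cases η; subst h; rfl

theorem summable_p : Summable ξ.p := ξ.total.summable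

theorem tsum_p : ∑' n, ξ.p n = 1 := ξ.total.tsum_eq

theorem p_le_one (n : ℕ) : ξ.p n ≤ 1 :=
  ξ.tsum_p ▸ ξ.summable_p.le_tsum n fun k _ => ξ.nonneg k

noncomputable def cdf (n : ℕ) : ℝ := ∑ k ∈ range n, ξ.p k

theorem cdf_succ (n : ℕ) : ξ.cdf (n + 1) = ξ.cdf n + ξ.p n := sum_range_succ _ n

theorem cdf_nonneg (n : ℕ) : 0 ≤ ξ.cdf n := sum_nonneg fun k _ => ξ.nonneg k

theorem cdf_le_one (n : ℕ) : ξ.cdf n ≤ 1 :=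
  ξ.tsum_p ▸ ξ.summable_p.sum_le_tsum (range n) fun k _ => ξ.nonneg k

variable {ξ} in
theorem cdf_eq_one_of_support_lt {K n : ℕ} (h : ∀ k, K ≤ k → ξ.p k = 0) (hn : K ≤ n) :
    ξ.cdf n = 1 := by
  rw [← ξ.tsum_p, tsum_eq_sum (s := range n) fun k hk => h k (hn.trans (by simpa using hk))]
  rfl

variable {ξ} in
theorem sum_range_mul_eq_exp_of_support_lt {K : ℕ} (h : ∀ k, K ≤ k → ξ.p k = 0) :
    ∑ k ∈ range K, (k : ℝ) * ξ.p k = ξ.exp := by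
  rw [exp, tsum_eq_sum (s := range K) fun k hk => by simp [h k (by simpa using hk)]]

variable {ξ} in
theorem p_sum_eq_one_and_exp_eq_of_support_lt_three (h : ∀ k, 3 ≤ k → ξ.p k = 0) :
    ξ.p 0 + ξ.p 1 + ξ.p 2 = 1 ∧ ξ.p 1 + 2 * ξ.p 2 = ξ.exp := by
  have hsum := cdf_eq_one_of_support_lt h le_rfl
  have hexp := sum_range_mul_eq_exp_of_support_lt h
  simp only [cdf, sum_range_succ, sum_range_zero] at hsum hexp
  push_cast at hexp
  constructor <;> linarith

noncomputable def winProb (n : ℕ) : ℝ := ξ.cdf n + ξ.p n / 2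

theorem winProb_nonneg (n : ℕ) : 0 ≤ ξ.winProb n := by
  have := ξ.cdf_nonneg n; have := ξ.nonneg n; unfold winProb; linarith

theorem winProb_le_one (n : ℕ) : ξ.winProb n ≤ 1 := by
  have := ξ.cdf_le_one (n + 1); have := ξ.nonneg n
  rw [cdf_succ] at *; unfold winProb; linarith

theorem winProb_zero : ξ.winProb 0 = ξ.p 0 / 2 := by simp [winProb, cdf]

theorem winProb_one : ξ.winProb 1 = ξ.p 0 + ξ.p 1 / 2 := by simp [winProb, cdf]

theorem winProb_two : ξ.winProb 2 = ξ.p 0 + ξ.p 1 + ξ.p 2 / 2 := by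
  simp [winProb, cdf, sum_range_succ]

variable {ξ} in
theorem winProb_eq_one_of_support_lt {K n : ℕ} (h : ∀ k, K ≤ k → ξ.p k = 0) (hn : K ≤ n) :
    ξ.winProb n = 1 := by
  simp [winProb, cdf_eq_one_of_support_lt h hn, h n hn]

theorem summable_nat_mul_p_succ : Summable fun n : ℕ => (n : ℝ) * ξ.p (n + 1) := by
  have hshift : Summable fun n : ℕ => ((n : ℝ) + 1) * ξ.p (n + 1) := by
    simpa using (summable_nat_add_iff 1).2 ξ.finExp
  simpa [add_mul] using hshift.sub ((summable_nat_add_iff 1).2 ξ.summable_p)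

theorem exp_eq_one_sub_p_zero_add_tsum :
    ξ.exp = 1 - ξ.p 0 + ∑' n : ℕ, (n : ℝ) * ξ.p (n + 1) := by
  have hp := ξ.summable_p.tsum_eq_zero_add
  have hnp := ξ.finExp.tsum_eq_zero_add
  have hsplit : ∑' n : ℕ, ((n + 1 : ℕ) : ℝ) * ξ.p (n + 1)
      = ∑' n : ℕ, (n : ℝ) * ξ.p (n + 1) + ∑' n, ξ.p (n + 1) := by
    rw [← ξ.summable_nat_mul_p_succ.tsum_add ((summable_nat_add_iff 1).2 ξ.summable_p)]
    push_cast; congr 1; ext n; ring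
  rw [tsum_p] at hp
  rw [exp, hnp, hsplit]
  push_cast
  linarith

theorem one_sub_p_zero_le_exp : 1 - ξ.p 0 ≤ ξ.exp := by
  rw [exp_eq_one_sub_p_zero_add_tsum]
  exact le_add_of_nonneg_right
    (tsum_nonneg fun n => mul_nonneg (Nat.cast_nonneg n) (ξ.nonneg (n + 1)))

noncomputable def pure (j : ℕ) : Strategy where
  p := deltaFn j
  nonneg n := by unfold deltaFn; split <;> norm_num
  total := hasSum_ite_eq j (1 : ℝ)
  finExp := summable_of_ne_finset_zero (s := {j}) fun n hn => by simp_all [deltaFn]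

theorem pure_p (j : ℕ) : (pure j).p = deltaFn j := rfl

variable {ξ} in
theorem eq_pure_one_of_exp_eq_one (h1 : ξ.exp = 1) (h0 : ξ.p 0 = 0) : ξ = pure 1 := by
  have htail : ∑' n : ℕ, (n : ℝ) * ξ.p (n + 1) = 0 := by
    have := ξ.exp_eq_one_sub_p_zero_add_tsum; linarith
  have hterm := (hasSum_zero_iff_of_nonneg fun n : ℕ =>
    mul_nonneg (Nat.cast_nonneg (α := ℝ) n) (ξ.nonneg (n + 1))).1
      (htail ▸ ξ.summable_nat_mul_p_succ.hasSum)
  have hge2 : ∀ n, 2 ≤ n → ξ.p n = 0 := by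
    intro n hn
    obtain ⟨m, rfl⟩ := Nat.exists_eq_add_of_le' hn
    simpa [Nat.cast_add_one_ne_zero] using congrFun hterm (m + 1)
  have hp1 : ξ.p 1 = 1 := by
    have := cdf_eq_one_of_support_lt hge2 le_rfl
    simpa [cdf, sum_range_succ, h0] using this
  ext n
  rcases n with _ | _ | n
  · simp [pure_p, deltaFn, h0]
  · simp [pure_p, deltaFn, hp1]
  · simp [pure_p, deltaFn, hge2 (n + 2) (by omega)]

theorem hasSum_two_mul_p_mul_cdf_add_p_mul_p :
    HasSum (fun n => 2 * (ξ.p n * ξ.cdf n) + ξ.p n * ξ.p n) 1 := by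
  rw [hasSum_iff_tendsto_nat_of_nonneg fun n => by
    have := ξ.nonneg n; have := ξ.cdf_nonneg n; positivity]
  have hsq : ∀ K, ∑ n ∈ range K, (2 * (ξ.p n * ξ.cdf n) + ξ.p n * ξ.p n) = ξ.cdf K ^ 2 := by
    intro K
    induction K with
    | zero => simp [cdf]
    | succ K ih => rw [sum_range_succ, ih, cdf_succ]; ring
  rw [show (fun K => ∑ n ∈ range K, (2 * (ξ.p n * ξ.cdf n) + ξ.p n * ξ.p n))
      = fun K => ξ.cdf K ^ 2 from funext hsq]
  simpa [cdf] using ξ.total.tendsto_sum_nat.pow 2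

end Strategy

open Strategy

section Payoff

variable {v c : ℝ} {ξ η : Strategy}

theorem summable_p_mul_of_nonneg_of_le_one {f : ℕ → ℝ} (h0 : ∀ n, 0 ≤ f n)
    (h1 : ∀ n, f n ≤ 1) : Summable fun n => ξ.p n * f n :=
  .of_nonneg_of_le (fun n => mul_nonneg (ξ.nonneg n) (h0 n))
    (fun n => mul_le_of_le_one_right (ξ.nonneg n) (h1 n)) ξ.summable_p

theorem summable_p_mul_pure_payoff (v : ℝ) (ξ η : Strategy) :
    Summable fun n => ξ.p n * (v * η.winProb n - n) := by
  simp only [mul_sub, mul_left_comm _ v, mul_comm (ξ.p _) (Nat.cast _)]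
  exact ((summable_p_mul_of_nonneg_of_le_one η.winProb_nonneg η.winProb_le_one).mul_left v).sub
    ξ.finExp

theorem payoff_eq_tsum (v : ℝ) (ξ η : Strategy) :
    payoff v ξ η = ∑' n, ξ.p n * (v * η.winProb n - n) := by
  have hgt := (summable_p_mul_of_nonneg_of_le_one (ξ := ξ) η.cdf_nonneg η.cdf_le_one).mul_left v
  have heq := (summable_p_mul_of_nonneg_of_le_one (ξ := ξ) η.nonneg η.p_le_one).mul_left (v / 2)
  rw [tsum_congr fun n => show ξ.p n * (v * η.winProb n - n)
      = v * (ξ.p n * η.cdf n) + v / 2 * (ξ.p n * η.p n) - n * ξ.p n by unfold winProb; ring,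
    (hgt.add heq).tsum_sub ξ.finExp, hgt.tsum_add heq, tsum_mul_left, tsum_mul_left]
  rfl

theorem payoff_self (v : ℝ) (ξ : Strategy) : payoff v ξ ξ = v / 2 - ξ.exp := by
  have hgt := summable_p_mul_of_nonneg_of_le_one (ξ := ξ) ξ.cdf_nonneg ξ.cdf_le_one
  have heq := summable_p_mul_of_nonneg_of_le_one (ξ := ξ) ξ.nonneg ξ.p_le_one
  have h := ξ.hasSum_two_mul_p_mul_cdf_add_p_mul_p.tsum_eq
  rw [(hgt.mul_left 2).tsum_add heq, tsum_mul_left] at h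
  change v * ∑' n, ξ.p n * ξ.cdf n + v / 2 * ∑' n, ξ.p n * ξ.p n - ξ.exp = _
  linear_combination v / 2 * h

theorem payoff_pure (v : ℝ) (j : ℕ) (η : Strategy) :
    payoff v (pure j) η = v * η.winProb j - j := by
  rw [payoff_eq_tsum, tsum_eq_single j fun n hn => by simp [pure_p, deltaFn, hn]]
  simp [pure_p, deltaFn]

theorem payoff_le_of_forall_pure_le (h : ∀ n : ℕ, v * η.winProb n - n ≤ c) (ξ : Strategy) :
    payoff v ξ η ≤ c := by
  rw [payoff_eq_tsum]
  calc ∑' n, ξ.p n * (v * η.winProb n - n) ≤ ∑' n, ξ.p n * c :=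
        (summable_p_mul_pure_payoff v ξ η).tsum_le_tsum
          (fun n => mul_le_mul_of_nonneg_left (h n) (ξ.nonneg n)) (ξ.summable_p.mul_right c)
    _ = c := by rw [tsum_mul_right, tsum_p, one_mul]

theorem payoff_eq_of_forall_support (h : ∀ n : ℕ, ξ.p n ≠ 0 → v * η.winProb n - n = c) :
    payoff v ξ η = c := by
  rw [payoff_eq_tsum, tsum_congr fun n => show ξ.p n * (v * η.winProb n - n) = ξ.p n * c by
    by_cases hn : ξ.p n = 0
    · simp [hn]
    · rw [h n hn], tsum_mul_right, tsum_p, one_mul]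

end Payoff

def IsBestResponse (v : ℝ) (ξ η : Strategy) : Prop :=
  ∀ ξ' : Strategy, payoff v ξ' η ≤ payoff v ξ η

namespace IsBestResponse

variable {v : ℝ} {ξ η : Strategy}

theorem pure_le (h : IsBestResponse v ξ η) (n : ℕ) : v * η.winProb n - n ≤ payoff v ξ η :=
  payoff_pure v n η ▸ h (pure n)

theorem pure_eq (h : IsBestResponse v ξ η) {n : ℕ} (hn : ξ.p n ≠ 0) :
    v * η.winProb n - n = payoff v ξ η := by
  set P := payoff v ξ η
  -- The gaps `P - (v * η.winProb k - k)` are nonnegative and their `ξ`-average vanishes.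
  have hgap : HasSum (fun k => ξ.p k * (P - (v * η.winProb k - k))) 0 := by
    have := (ξ.summable_p.mul_right P).hasSum.sub (summable_p_mul_pure_payoff v ξ η).hasSum
    rw [tsum_mul_right, tsum_p, one_mul, ← payoff_eq_tsum, sub_self] at this
    simpa only [mul_sub] using this
  have hzero := congrFun ((hasSum_zero_iff_of_nonneg fun k =>
    mul_nonneg (ξ.nonneg k) (sub_nonneg.2 (h.pure_le k))).1 hgap) n
  have := (mul_eq_zero.1 hzero).resolve_left hn
  linarith

theorem p_eq_zero_of_support_lt {K : ℕ} (h : IsBestResponse v ξ η)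
    (hη : ∀ k, K ≤ k → η.p k = 0) {m : ℕ} (hm : K < m) : ξ.p m = 0 := by
  -- Past the support of `η`, bidding one less wins as often and costs less.
  by_contra hne
  obtain ⟨k, rfl⟩ := Nat.exists_eq_add_of_lt hm
  have heq := h.pure_eq hne
  have hle := h.pure_le (K + k)
  rw [winProb_eq_one_of_support_lt hη (by omega)] at heq hle
  push_cast at heq hle
  linarith

end IsBestResponse

theorem isBestResponse_pure_iff {v : ℝ} {j : ℕ} {η : Strategy} :
    IsBestResponse v (pure j) η ↔ ∀ n : ℕ, v * η.winProb n - n ≤ v * η.winProb j - j := by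
  simp only [IsBestResponse, payoff_pure]
  exact ⟨fun h n => payoff_pure v n η ▸ h (pure n), payoff_le_of_forall_pure_le⟩

theorem pure_p_of_lt {j k : ℕ} (h : j < k) : (pure j).p k = 0 := by
  simp [pure_p, deltaFn, h.ne']

theorem winProb_pure_one_zero : (pure 1).winProb 0 = 0 := by
  simp [winProb_zero, pure_p, deltaFn]

theorem winProb_pure_one_one : (pure 1).winProb 1 = 1 / 2 := by
  simp [winProb_one, pure_p, deltaFn]

theorem winProb_pure_one_of_two_le {n : ℕ} (hn : 2 ≤ n) : (pure 1).winProb n = 1 :=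
  winProb_eq_one_of_support_lt (fun _ hk => pure_p_of_lt hk) hn

theorem payoff_two_pure_one_of_support_lt_three {η : Strategy}
    (hη : ∀ k, 3 ≤ k → η.p k = 0) :
    payoff 2 η (pure 1) = 0 := by
  refine payoff_eq_of_forall_support fun n hn => ?_
  have : n < 3 := by by_contra h; exact hn (hη n (by omega))
  interval_cases n
  · simp [winProb_pure_one_zero]
  · norm_num [winProb_pure_one_one]
  · norm_num [winProb_pure_one_of_two_le]

theorem isBestResponse_two_pure_one_iff {η : Strategy} :
    IsBestResponse 2 η (pure 1) ↔ ∀ k, 3 ≤ k → η.p k = 0 := by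
  refine ⟨fun h k hk => h.p_eq_zero_of_support_lt (fun _ hk => pure_p_of_lt hk) hk,
    fun hη ξ' => ?_⟩
  rw [payoff_two_pure_one_of_support_lt_three hη]
  refine payoff_le_of_forall_pure_le (fun n => ?_) ξ'
  rcases n with _ | _ | n
  · simp [winProb_pure_one_zero]
  · norm_num [winProb_pure_one_one]
  · rw [winProb_pure_one_of_two_le (by omega)]; push_cast; linarith [n.cast_nonneg (α := ℝ)]

theorem IsBestResponse.eq_two_of_pure_one {v : ℝ} {η : Strategy}
    (h : IsBestResponse v η (pure 1)) (h0 : η.p 0 ≠ 0) {m : ℕ} (hm : 1 ≤ m) (hm' : η.p m ≠ 0) :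
    v = 2 := by
  have hvalue := h.pure_eq h0
  have hle := h.pure_le 2
  have heq := h.pure_eq hm'
  rw [winProb_pure_one_zero] at hvalue
  rw [winProb_pure_one_of_two_le le_rfl, ← hvalue] at hle
  rw [← hvalue] at heq
  rcases hm.eq_or_lt with rfl | hm
  · rw [winProb_pure_one_one] at heq; push_cast at heq; linarith
  · rw [winProb_pure_one_of_two_le hm] at heq
    have : (2 : ℝ) ≤ m := by exact_mod_cast hm
    push_cast at hle heq; linarith

theorem isBestResponse_pure_one_iff {v : ℝ} (hv : 0 ≤ v) {η : Strategy}
    (hη : ∀ k, 3 ≤ k → η.p k = 0) :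
    IsBestResponse v (pure 1) η ↔ 2 ≤ v * (η.p 0 + η.p 1) ∧ v * (η.p 1 + η.p 2) ≤ 2 := by
  have hsum := (p_sum_eq_one_and_exp_eq_of_support_lt_three hη).1
  have := η.nonneg 1
  rw [isBestResponse_pure_iff, winProb_one]
  refine ⟨fun h => ⟨?_, ?_⟩, fun ⟨h0, h2⟩ n => ?_⟩
  · have := h 0; rw [winProb_zero] at this; push_cast at this; linarith
  · have := h 2; rw [winProb_two] at this; push_cast at this; linarith
  · rcases n with _ | _ | _ | n
    · rw [winProb_zero]; push_cast; linarith
    · simp [winProb_one]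
    · rw [winProb_two]; push_cast; linarith
    · rw [winProb_eq_one_of_support_lt hη (by omega)]; push_cast
      nlinarith [n.cast_nonneg (α := ℝ)]

theorem IsNashAPA.p_zero_eq_zero {v1 v2 : ℝ} {X Y : Strategy} (hv1 : 0 < v1)
    (hX : X.exp = 1) (hY : Y.exp < 1) (h : IsNashAPA v1 v2 X Y) : X.p 0 = 0 := by
  by_contra hX0
  obtain ⟨hXbr, hYbr⟩ : IsBestResponse v1 X Y ∧ IsBestResponse v2 Y X := h
  have hvalue : payoff v1 X Y = v1 * (Y.p 0 / 2) := by
    simpa [winProb_zero] using (hXbr.pure_eq hX0).symm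
  have hbid1 : v1 * (Y.p 0 + Y.p 1) ≤ 2 := by
    have := hXbr.pure_le 1; rw [winProb_one, hvalue] at this; push_cast at this; linarith
  have hcopy : v1 * (1 - Y.p 0) ≤ 2 * Y.exp := by
    have := hXbr Y; rw [payoff_self, hvalue] at this; linarith
  have hX3 : ∀ k, 3 ≤ k → X.p k = 0 := by
    intro k hk
    by_contra hk'
    have := hXbr.pure_eq hk'
    rw [hvalue] at this
    have : (3 : ℝ) ≤ k := by exact_mod_cast hk
    nlinarith [Y.winProb_le_one k, Y.nonneg 1]
  obtain ⟨hXsum, hXexp⟩ := p_sum_eq_one_and_exp_eq_of_support_lt_three hX3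
  have hX2 : X.p 2 ≠ 0 := by intro h2; apply hX0; linarith
  have hY02 : Y.p 0 ≤ Y.p 2 := by
    have := hXbr.pure_eq hX2; rw [winProb_two, hvalue] at this; push_cast at this
    nlinarith [Y.nonneg 1]
  have hY4 : ∀ k, 4 ≤ k → Y.p k = 0 := fun k hk => hYbr.p_eq_zero_of_support_lt hX3 hk
  have hYsum := cdf_eq_one_of_support_lt hY4 le_rfl
  have hYexp := sum_range_mul_eq_exp_of_support_lt hY4
  simp only [cdf, sum_range_succ, sum_range_zero] at hYsum hYexp
  push_cast at hYexp
  linarith [Y.nonneg 1, Y.nonneg 3]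

theorem exists_p_ne_zero_of_exp_pos {ξ : Strategy} (h : 0 < ξ.exp) :
    ∃ m, 1 ≤ m ∧ ξ.p m ≠ 0 := by
  by_contra! hzero
  have := sum_range_mul_eq_exp_of_support_lt hzero
  simp only [range_one, sum_singleton, Nat.cast_zero, zero_mul] at this
  linarith

theorem isNashAPA_iff_of_exp {v1 v2 : ℝ} {X Y : Strategy} (hv1 : 0 < v1) (hX : X.exp = 1)
    (hY0 : 0 < Y.exp) (hY1 : Y.exp < 1) :
    IsNashAPA v1 v2 X Y ↔ X = pure 1 ∧ v2 = 2 ∧ (∀ k, 3 ≤ k → Y.p k = 0) ∧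
      2 ≤ v1 * (Y.p 0 + Y.p 1) ∧ v1 * (Y.p 1 + Y.p 2) ≤ 2 := by
  have hYp0 : Y.p 0 ≠ 0 := by linarith [Y.one_sub_p_zero_le_exp]
  constructor
  · intro h
    obtain rfl := eq_pure_one_of_exp_eq_one hX (h.p_zero_eq_zero hv1 hX hY1)
    obtain ⟨hXbr, hYbr⟩ : IsBestResponse v1 (pure 1) Y ∧ IsBestResponse v2 Y (pure 1) := h
    obtain ⟨m, hm, hm'⟩ := exists_p_ne_zero_of_exp_pos hY0
    obtain rfl := hYbr.eq_two_of_pure_one hYp0 hm hm'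
    have hY3 := isBestResponse_two_pure_one_iff.1 hYbr
    exact ⟨rfl, rfl, hY3, (isBestResponse_pure_one_iff hv1.le hY3).1 hXbr⟩
  · rintro ⟨rfl, rfl, hY3, hbids⟩
    exact ⟨(isBestResponse_pure_one_iff hv1.le hY3).2 hbids,
      isBestResponse_two_pure_one_iff.2 hY3⟩

theorem forall_eq_mixture_iff (f : ℕ → ℝ) (b l : ℝ) :
    (∀ n, f n = (1 - b) * deltaFn 0 n + b * (l * UO 1 n + (1 - l) * UE 1 n)) ↔
      f 0 = 1 - b + b * (1 - l) / 2 ∧ f 1 = b * l ∧ f 2 = b * (1 - l) / 2 ∧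
        ∀ k, 3 ≤ k → f k = 0 := by
  have hmix : ∀ n, (1 - b) * deltaFn 0 n + b * (l * UO 1 n + (1 - l) * UE 1 n) =
      if n = 0 then 1 - b + b * (1 - l) / 2 else if n = 1 then b * l
      else if n = 2 then b * (1 - l) / 2 else 0 := by
    rintro (_ | _ | _ | n)
    · norm_num [deltaFn, UO, UE]; ring
    · norm_num [deltaFn, UO, UE]
    · norm_num [deltaFn, UO, UE]; ring
    · simp [deltaFn, UO, UE]
  simp only [hmix]
  refine ⟨fun h => ⟨by simpa using h 0, by simpa using h 1, by simpa using h 2, fun k hk => ?_⟩,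
    fun ⟨h0, h1, h2, h3⟩ n => ?_⟩
  · simpa [show k ≠ 0 by omega, show k ≠ 1 by omega, show k ≠ 2 by omega] using h k
  · rcases n with _ | _ | _ | n <;> simp [*]

theorem four_div_sub_two_div_add_one_le_iff {b v l : ℝ} (hb : 0 < b) (hv : 0 < v) :
    4 / (b * v) - 2 / b + 1 ≤ l ↔ 4 ≤ v * (2 - b + b * l) := by
  rw [show 4 / (b * v) - 2 / b + 1 = (4 - 2 * v + b * v) / (b * v) by field_simp,
    div_le_iff₀ (by positivity)]
  constructor <;> intro h <;> linarith

theorem le_four_div_sub_one_iff {b v l : ℝ} (hb : 0 < b) (hv : 0 < v) :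
    l ≤ 4 / (b * v) - 1 ↔ b * v * (1 + l) ≤ 4 := by
  rw [show 4 / (b * v) - 1 = (4 - b * v) / (b * v) by field_simp,
    le_div_iff₀ (by positivity)]
  constructor <;> intro h <;> linarith

theorem support_lt_three_and_bid_bounds_iff_mixture {v b : ℝ} (hv : 0 < v) (hb : 0 < b)
    {Y : Strategy} (hY : Y.exp = b) :
    ((∀ k, 3 ≤ k → Y.p k = 0) ∧ 2 ≤ v * (Y.p 0 + Y.p 1) ∧ v * (Y.p 1 + Y.p 2) ≤ 2) ↔
      2 ≤ v ∧ b ≤ 4 / v ∧ ∃ l : ℝ, 0 ≤ l ∧ l ≤ 1 ∧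
        4 / (b * v) - 2 / b + 1 ≤ l ∧ l ≤ 4 / (b * v) - 1 ∧
        ∀ n, Y.p n = (1 - b) * deltaFn 0 n + b * (l * UO 1 n + (1 - l) * UE 1 n) := by
  have := Y.nonneg 1
  have := Y.nonneg 2
  simp only [forall_eq_mixture_iff, four_div_sub_two_div_add_one_le_iff hb hv,
    le_four_div_sub_one_iff hb hv, le_div_iff₀ hv]
  constructor
  · rintro ⟨hY3, hlow, hup⟩
    obtain ⟨hsum, hexp⟩ := p_sum_eq_one_and_exp_eq_of_support_lt_three hY3
    rw [hY] at hexp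
    have hl : b * (Y.p 1 / b) = Y.p 1 := by field_simp
    refine ⟨by nlinarith [Y.nonneg 0], by nlinarith, Y.p 1 / b, by positivity,
      by rw [div_le_one hb]; linarith, by nlinarith, by nlinarith, by linarith, hl.symm,
      by linarith, hY3⟩
  · rintro ⟨-, -, l, -, -, hlow, hup, h0, h1, h2, hY3⟩
    refine ⟨hY3, by nlinarith, by nlinarith⟩

theorem payoff_pure_one_of_support_lt_three {v : ℝ} {η : Strategy}
    (hη : ∀ k, 3 ≤ k → η.p k = 0) :
    payoff v (pure 1) η = v / 2 * (2 - η.exp) - 1 := by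
  obtain ⟨hsum, hexp⟩ := p_sum_eq_one_and_exp_eq_of_support_lt_three hη
  rw [payoff_pure, winProb_one, ← hexp]
  push_cast
  linear_combination v * hsum

theorem forall_p_eq_UO_one_iff {ξ : Strategy} : (∀ n, ξ.p n = UO 1 n) ↔ ξ = pure 1 := by
  have hUO : UO 1 = deltaFn 1 := by
    ext (_ | _ | n) <;> simp [UO, deltaFn]
  rw [hUO, ← funext_iff, ← pure_p, Strategy.ext_iff]

theorem allpay_eq_exp_one_b_general (v1 v2 b : ℝ) (hv1 : 0 < v1)
    (hb0 : 0 < b) (hb1 : b < 1) (X Y : Strategy)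
    (hX : X.exp = 1) (hY : Y.exp = b) :
    (IsNashAPA v1 v2 X Y ↔
      (v2 = 2 ∧ v2 ≤ v1 ∧ b ≤ 4 / v1 ∧
       (∀ n, X.p n = UO 1 n) ∧
       ∃ lmb : ℝ, 0 ≤ lmb ∧ lmb ≤ 1 ∧
         4 / (b * v1) - 2 / b + 1 ≤ lmb ∧ lmb ≤ 4 / (b * v1) - 1 ∧
         (∀ n, Y.p n = (1 - b) * deltaFn 0 n +
            b * (lmb * UO 1 n + (1 - lmb) * UE 1 n)))) ∧
    (IsNashAPA v1 v2 X Y →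
      payoff v1 X Y = v1 / 2 * (2 - b) - 1 ∧ payoff v2 Y X = 0) := by
  have hNash := isNashAPA_iff_of_exp (v2 := v2) hv1 hX (hY ▸ hb0) (hY ▸ hb1)
  refine ⟨?_, fun h => ?_⟩
  · rw [hNash, support_lt_three_and_bid_bounds_iff_mixture hv1 hb0 hY, forall_p_eq_UO_one_iff]
    constructor
    · rintro ⟨hX1, rfl, hv, hb, hl⟩
      exact ⟨rfl, hv, hb, hX1, hl⟩
    · rintro ⟨rfl, hv, hb, hX1, hl⟩
      exact ⟨hX1, rfl, hv, hb, hl⟩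
  · obtain ⟨rfl, rfl, hY3, -⟩ := hNash.1 h
    exact ⟨hY ▸ payoff_pure_one_of_support_lt_three hY3,
      payoff_two_pure_one_of_support_lt_three hY3⟩

/-- Proposition 7.1: equilibria with `E(X) = 1`, `E(Y) = b ∈ (0,1)`. -/
theorem allpay_eq_exp_one_b (v1 v2 b : ℝ) (hv1 : 0 < v1) (hv2 : 0 < v2)
    (hb0 : 0 < b) (hb1 : b < 1) (X Y : Strategy)
    (hX : X.exp = 1) (hY : Y.exp = b) :
    (IsNashAPA v1 v2 X Y ↔
      (v2 = 2 ∧ v2 ≤ v1 ∧ b ≤ 4 / v1 ∧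
       (∀ n, X.p n = UO 1 n) ∧
       ∃ lmb : ℝ, 0 ≤ lmb ∧ lmb ≤ 1 ∧
         4 / (b * v1) - 2 / b + 1 ≤ lmb ∧ lmb ≤ 4 / (b * v1) - 1 ∧
         (∀ n, Y.p n = (1 - b) * deltaFn 0 n +
            b * (lmb * UO 1 n + (1 - lmb) * UE 1 n)))) ∧
    (IsNashAPA v1 v2 X Y →
      payoff v1 X Y = v1 / 2 * (2 - b) - 1 ∧ payoff v2 Y X = 0) :=
  allpay_eq_exp_one_b_general v1 v2 b hv1 hb0 hb1 X Y hX hY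
end

section
/- Let v1 ≥ v2 > 0. If (X, Y) and (X', Y') are both Nash equilibria of the two-player all-pay auction with valuations (v1, v2), then (X, Y') and (X', Y) are also Nash equilibria of the two-player all-pay auction with valuations (v1, v2) (equilibria are interchangeable). -/
/-!
Since `Pr(X > Y) + Pr(X < Y) + Pr(X = Y) = 1`, the payoff is `v/2 + (v/2)·H(ξ, η) − E ξ`.
Scaling player 1's payoff by `2/v1`, player 2's by `2/v2`, and adding terms a player does not
control does not change best responses, and turns the auction into the zero-sum game in which
player 1 receives `H(ξ, η) − (2/v1)·E ξ + (2/v2)·E η`. Nash equilibria are therefore saddle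
points, and saddle points of a zero-sum game are interchangeable.
-/

open scoped BigOperators

open Set

namespace Strategy

noncomputable def joint (ξ η : Strategy) (p : ℕ × ℕ) : ℝ := ξ.p p.1 * η.p p.2

variable (ξ η : Strategy)

lemma hasSum_joint : HasSum (joint ξ η) 1 := by
  unfold joint
  simpa using ξ.total.mul η.total
    (ξ.total.summable.mul_of_nonneg η.total.summable ξ.nonneg η.nonneg)

lemma summable_indicator_joint (s : Set (ℕ × ℕ)) : Summable (s.indicator (joint ξ η)) :=
  (hasSum_joint ξ η).summable.indicator s

lemma tsum_indicator_lt_joint :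
    ∑' p, {p : ℕ × ℕ | p.2 < p.1}.indicator (joint ξ η) p = prGT ξ η := by
  have row (n : ℕ) (k : ℕ) (hk : k ∉ Finset.range n) :
      {p : ℕ × ℕ | p.2 < p.1}.indicator (joint ξ η) (n, k) = 0 :=
    indicator_of_notMem (by simpa using hk) _
  rw [(summable_indicator_joint ξ η _).tsum_prod' fun n => summable_of_ne_finset_zero (row n)]
  refine tsum_congr fun n => ?_
  rw [tsum_eq_sum (row n), Finset.mul_sum]
  refine Finset.sum_congr rfl fun k hk => ?_
  simp [joint, Finset.mem_range.1 hk]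

lemma tsum_indicator_gt_joint :
    ∑' p, {p : ℕ × ℕ | p.1 < p.2}.indicator (joint ξ η) p = prGT η ξ := by
  rw [← tsum_indicator_lt_joint, ← (Equiv.prodComm ℕ ℕ).tsum_eq]
  congr 1
  ext ⟨m, n⟩
  simp [indicator_apply, joint, mul_comm]

lemma tsum_indicator_diag_joint :
    ∑' p, {p : ℕ × ℕ | p.1 = p.2}.indicator (joint ξ η) p = prEq ξ η := by
  have row (n : ℕ) (k : ℕ) (hk : k ≠ n) :
      {p : ℕ × ℕ | p.1 = p.2}.indicator (joint ξ η) (n, k) = 0 := by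
    simp [Ne.symm hk]
  rw [(summable_indicator_joint ξ η _).tsum_prod' fun n =>
    summable_of_ne_finset_zero (s := {n}) fun k hk => row n k (by simpa using hk)]
  refine tsum_congr fun n => ?_
  rw [tsum_eq_single n (row n)]
  simp [joint]

end Strategy

open Strategy in
lemma prGT_add_prGT_add_prEq (ξ η : Strategy) : prGT ξ η + prGT η ξ + prEq ξ η = 1 := by
  have split : ∀ p : ℕ × ℕ, joint ξ η p =
      {p : ℕ × ℕ | p.2 < p.1}.indicator (joint ξ η) p +
        {p : ℕ × ℕ | p.1 < p.2}.indicator (joint ξ η) p +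
        {p : ℕ × ℕ | p.1 = p.2}.indicator (joint ξ η) p := by
    rintro ⟨m, n⟩
    rcases lt_trichotomy m n with h | rfl | h
    · simp [h, h.ne, h.not_gt]
    · simp
    · simp [h, h.ne', h.not_gt]
  rw [← tsum_indicator_lt_joint, ← tsum_indicator_gt_joint, ← tsum_indicator_diag_joint,
    ← Summable.tsum_add (summable_indicator_joint ξ η _) (summable_indicator_joint ξ η _),
    ← Summable.tsum_add ((summable_indicator_joint ξ η _).add (summable_indicator_joint ξ η _))
      (summable_indicator_joint ξ η _), ← tsum_congr split, (hasSum_joint ξ η).tsum_eq]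

lemma payoff_eq_Hval (v : ℝ) (ξ η : Strategy) :
    payoff v ξ η = v / 2 + v / 2 * Hval ξ η - ξ.exp := by
  have hEq : prEq ξ η = 1 - prGT ξ η - prGT η ξ := by
    linarith [prGT_add_prGT_add_prEq ξ η]
  rw [payoff, Hval, hEq]
  ring

/-- Minus player 1's payoff in the zero-sum form of the auction; the sign follows
`IsSaddlePointOn`, where the first player minimizes. -/
noncomputable def apaZeroSum (v1 v2 : ℝ) (ξ η : Strategy) : ℝ :=
  Hval η ξ + 2 / v1 * ξ.exp - 2 / v2 * η.exp

section ZeroSum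

variable {v1 v2 : ℝ} {ξ ξ' η η' : Strategy}

lemma payoff_le_payoff_iff_apaZeroSum_le_left (hv1 : 0 < v1) :
    payoff v1 ξ' η ≤ payoff v1 ξ η ↔ apaZeroSum v1 v2 ξ η ≤ apaZeroSum v1 v2 ξ' η := by
  have key (ξ : Strategy) :
      payoff v1 ξ η = v1 / 2 - v1 / 2 * apaZeroSum v1 v2 ξ η - v1 / v2 * η.exp := by
    rw [payoff_eq_Hval, apaZeroSum, Hval, Hval]
    field_simp
    ring
  rw [key, key, sub_le_sub_iff_right, sub_le_sub_iff_left,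
    mul_le_mul_iff_of_pos_left (by linarith)]

lemma payoff_le_payoff_iff_apaZeroSum_le_right (hv2 : 0 < v2) :
    payoff v2 η' ξ ≤ payoff v2 η ξ ↔ apaZeroSum v1 v2 ξ η' ≤ apaZeroSum v1 v2 ξ η := by
  have key (η : Strategy) :
      payoff v2 η ξ = v2 / 2 + v2 / 2 * apaZeroSum v1 v2 ξ η - v2 / v1 * ξ.exp := by
    rw [payoff_eq_Hval, apaZeroSum]
    field_simp
    ring
  rw [key, key, sub_le_sub_iff_right, add_le_add_iff_left,
    mul_le_mul_iff_of_pos_left (by linarith)]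

lemma isNashAPA_iff_isSaddlePointOn (hv1 : 0 < v1) (hv2 : 0 < v2) (X Y : Strategy) :
    IsNashAPA v1 v2 X Y ↔ IsSaddlePointOn univ univ (apaZeroSum v1 v2) X Y := by
  simp only [IsNashAPA, IsSaddlePointOn, mem_univ, forall_const,
    payoff_le_payoff_iff_apaZeroSum_le_left (v2 := v2) hv1,
    payoff_le_payoff_iff_apaZeroSum_le_right (v1 := v1) hv2]
  exact ⟨fun h ξ η => (h.2 η).trans (h.1 ξ), fun h => ⟨fun ξ => h ξ Y, fun η => h X η⟩⟩

end ZeroSum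

/-- equilibria of the all-pay auction are interchangeable. -/
theorem allpay_interchangeable (v1 v2 : ℝ) (hv2 : 0 < v2) (hv : v2 ≤ v1)
    (X Y X' Y' : Strategy)
    (h : IsNashAPA v1 v2 X Y) (h' : IsNashAPA v1 v2 X' Y') :
    IsNashAPA v1 v2 X Y' ∧ IsNashAPA v1 v2 X' Y := by
  have hv1 : 0 < v1 := hv2.trans_le hv
  simp only [isNashAPA_iff_isSaddlePointOn hv1 hv2] at h h' ⊢
  exact ⟨h.swap_left trivial trivial h', h.swap_right trivial trivial h'⟩
end
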